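/- (Farber) Let k be an algebraically closed field of characteristic zero and let A and B be finite-dimensional semisimple P_μ-module structures. Then A and B are isomorphic if and only if they have the same Farber coefficients, i.e. Tr_A(p_k ∘ ∂_α) = Tr_B(p_k ∘ ∂_α) for every k ∈ {1, …, μ} and every finite sequence α of indices. -/

import Mathlib

noncomputable section

variable (k : Type*) [Field k] (μ : ℕ)
variable {M : Type*} [AddCommGroup M] [Module k M]

/-- A `P_μ`-module structure: projections `p_1, …, p_μ` with `p_i p_j = δ_{ij} p_i`
and `p_1 + ⋯ + p_μ = 1`, together with an endomorphism `ζ`. -/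
def IsPmuStruct (p : Fin μ → Module.End k M) (ζ : Module.End k M) : Prop :=
  (∀ i j : Fin μ, i ≠ j → p i * p j = 0) ∧ (∀ i : Fin μ, p i * p i = p i) ∧
    (∑ i : Fin μ, p i) = 1

/-- For `α = (i_1, …, i_p)`, `dAlpha p ζ α = ∂_{i_p} ∘ ⋯ ∘ ∂_{i_1}` where
`∂_i = -ζ ∘ p_i`. -/
def dAlpha (p : Fin μ → Module.End k M) (ζ : Module.End k M) (α : List (Fin μ)) :
    Module.End k M :=
  α.foldl (fun acc i => (-(ζ * p i)) * acc) 1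

/-- The Farber coefficient `Tr(p_κ ∘ ∂_α)`. -/
def farberCoeff (p : Fin μ → Module.End k M) (ζ : Module.End k M)
    (κ : Fin μ) (α : List (Fin μ)) : k :=
  LinearMap.trace k M (p κ * dAlpha k μ p ζ α)

end


noncomputable section

variable (k : Type*) [Field k] (μ : ℕ)
variable {M : Type*} [AddCommGroup M] [Module k M]

/-- A `P_μ`-module structure is simple if the space is nonzero and has no proper
nonzero invariant subspaces. -/
def IsSimplePStruct (p : Fin μ → Module.End k M) (ζ : Module.End k M) : Prop :=
  (∃ x : M, x ≠ 0) ∧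
    ∀ q : Submodule k M,
      ((∀ i : Fin μ, ∀ x ∈ q, p i x ∈ q) ∧ ∀ x ∈ q, ζ x ∈ q) → q = ⊥ ∨ q = ⊤

/-- A `P_μ`-module structure is semisimple if the space is an internal direct sum of
simple invariant subspaces. -/
def IsSemisimplePStruct (p : Fin μ → Module.End k M) (ζ : Module.End k M) : Prop :=
  ∃ (n : ℕ) (s : Fin n → Submodule k M)
    (hsp : ∀ r i, ∀ x ∈ s r, p i x ∈ s r) (hsz : ∀ r, ∀ x ∈ s r, ζ x ∈ s r),
    DirectSum.IsInternal s ∧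
      ∀ r, IsSimplePStruct k μ (fun i => (p i).restrict (fun x hx => hsp r i x hx))
        (ζ.restrict (fun x hx => hsz r x hx))

end


open LinearMap DirectSum

section Helpers

variable {R M : Type*} [Ring R] [AddCommGroup M] [Module R M]

/-- Baby Jacobson density: in a semisimple module, any map commuting with all
`R`-endomorphisms agrees with some scalar action on a given vector. -/
lemma density_one (h : IsSemisimpleModule R M) (f : M → M)
    (hf : ∀ (φ : M →ₗ[R] M) (x : M), f (φ x) = φ (f x)) (v : M) :
    ∃ r : R, f v = r • v := by
  haveI := h
  obtain ⟨N', hN'⟩ := exists_isCompl (Submodule.span R {v})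
  set π : M →ₗ[R] M :=
    (Submodule.span R {v}).subtype ∘ₗ Submodule.linearProjOfIsCompl _ _ hN' with hπ
  have hπv : π v = v := by
    have h0 := Submodule.linearProjOfIsCompl_apply_left hN'
      ⟨v, Submodule.mem_span_singleton_self v⟩
    simp only [hπ, LinearMap.comp_apply]
    exact congrArg Subtype.val h0
  have h1 : f v = π (f v) :=
    calc f v = f (π v) := by rw [hπv]
    _ = π (f v) := hf π v
  have h2 : π (f v) ∈ Submodule.span R {v} := ((Submodule.linearProjOfIsCompl _ _ hN') (f v)).2
  rw [← h1] at h2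
  obtain ⟨r, hr⟩ := Submodule.mem_span_singleton.mp h2
  exact ⟨r, hr.symm⟩

lemma isSemisimpleModule_pi {ι : Type*} [Fintype ι] [DecidableEq ι] {M : ι → Type*}
    [∀ i, AddCommGroup (M i)] [∀ i, Module R (M i)]
    (h : ∀ i, IsSemisimpleModule R (M i)) : IsSemisimpleModule R (∀ i, M i) := by
  refine isSemisimpleModule_of_isSemisimpleModule_submodule'
    (p := fun i => LinearMap.range (LinearMap.single R M i)) (fun i => ?_) ?_
  · haveI := h i
    exact IsSemisimpleModule.congr
      (LinearEquiv.ofInjective (LinearMap.single R M i) (Pi.single_injective i)).symm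
  · rw [eq_top_iff]
    intro x _
    have hx : x = ∑ j, Pi.single j (x j) := (Finset.univ_sum_single x).symm
    rw [hx]
    exact Submodule.sum_mem _ fun j _ =>
      Submodule.mem_iSup_of_mem j ⟨x j, rfl⟩

lemma density_pi {ι : Type*} [Fintype ι] [DecidableEq ι]
    (h : IsSemisimpleModule R M) (f : M →+ M)
    (hf : ∀ (φ : M →ₗ[R] M) (x : M), f (φ x) = φ (f x)) (v : ι → M) :
    ∃ r : R, ∀ i, f (v i) = r • v i := by
  have hf' : ∀ (φ : (ι → M) →ₗ[R] (ι → M)) (x : ι → M),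
      (fun i => f ((φ x) i)) = φ (fun i => f (x i)) := by
    intro φ x
    funext i
    set φe : ι → ι → (M →ₗ[R] M) := fun i j =>
      (LinearMap.proj i) ∘ₗ φ ∘ₗ (LinearMap.single R (fun _ : ι => M) j) with hφe
    have hx : x = ∑ j, Pi.single j (x j) := (Finset.univ_sum_single x).symm
    have hφx : ∀ i, φ x i = ∑ j, φe i j (x j) := by
      intro i
      conv_lhs => rw [hx]
      rw [map_sum]
      simp [hφe]
    rw [hφx, map_sum]
    have : ∀ j, f (φe i j (x j)) = φe i j (f (x j)) := fun j => hf _ _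
    rw [Finset.sum_congr rfl fun j _ => this j]
    have : φ (fun i => f (x i)) i = ∑ j, φe i j (f (x j)) := by
      have hfx : (fun i => f (x i)) = ∑ j, Pi.single j (f (x j)) :=
        (Finset.univ_sum_single _).symm
      conv_lhs => rw [hfx]
      rw [map_sum]
      simp [hφe]
    rw [this]
  obtain ⟨r, hr⟩ := density_one (isSemisimpleModule_pi fun _ : ι => h) (fun x i => f (x i))
    (by intro φ x; exact (hf' φ x)) v
  refine ⟨r, fun i => ?_⟩
  have := congrFun hr i
  simpa using this

lemma IsSimpleModule.isSemisimpleModule' (h : IsSimpleModule R M) :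
    IsSemisimpleModule R M := by
  haveI := h
  refine IsSemisimpleModule.of_sSup_simples_eq_top (top_unique (le_sSup ?_))
  exact IsSimpleModule.congr Submodule.topEquiv

lemma isInternal_restrictScalars (k : Type*) [Ring k]
    {ι : Type*} [DecidableEq ι] [Module k M] [SMul k R] [IsScalarTower k R M]
    (S : ι → Submodule R M) (h : DirectSum.IsInternal S) :
    DirectSum.IsInternal (fun i => (S i).restrictScalars k) := by
  classical
  rw [DirectSum.isInternal_submodule_iff_iSupIndep_and_iSup_eq_top]
  have hInd := h.submodule_iSupIndep
  have hSup := h.submodule_iSup_eq_top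
  constructor
  · intro i
    rw [disjoint_iff]
    rw [Submodule.eq_bot_iff]
    intro x hx
    have hx1 : x ∈ (S i).restrictScalars k := hx.1
    have hx2 : x ∈ ⨆ j, ⨆ _ : j ≠ i, (S j).restrictScalars k := hx.2
    have hx2' : x ∈ ⨆ j, ⨆ _ : j ≠ i, S j := by
      have hle : (⨆ j, ⨆ _ : j ≠ i, (S j).restrictScalars k)
          ≤ ((⨆ j, ⨆ _ : j ≠ i, S j).restrictScalars k) := by
        refine iSup_le fun j => iSup_le fun hj => ?_
        intro y hy
        exact Submodule.mem_iSup_of_mem j (Submodule.mem_iSup_of_mem hj hy)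
      exact hle hx2
    exact Submodule.disjoint_def.mp (hInd i) x hx1 hx2'
  · rw [eq_top_iff]
    intro a _
    obtain ⟨x, hxa⟩ := h.surjective a
    classical
    rw [DirectSum.coeAddMonoidHom_eq_dfinsuppSum] at hxa
    rw [← hxa]
    refine Submodule.dfinsuppSum_mem _ _ _ fun i _ => ?_
    exact Submodule.mem_iSup_of_mem i (x i).2

lemma smulCommClass_of_algebra_tower (k : Type*) [CommSemiring k] [Algebra k R]
    [Module k M] [IsScalarTower k R M] : SMulCommClass k R M := by
  constructor
  intro c r x
  rw [← algebraMap_smul R c (r • x), ← mul_smul, Algebra.commutes, mul_smul, algebraMap_smul]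

end Helpers

noncomputable section Canon

variable {k : Type*} [Field k] {μ : ℕ} {M : Type*} [AddCommGroup M] [Module k M]
variable (p : Fin μ → Module.End k M) (ζ : Module.End k M)

def listProdP (α : List (Fin μ)) : Module.End k M :=
  (α.map fun i => ζ * p i).prod

def canonEl (κ : Fin μ) (α : List (Fin μ)) : Module.End k M :=
  p κ * listProdP p ζ α

def lastIdx (κ : Fin μ) (α : List (Fin μ)) : Fin μ :=
  α.foldl (fun _ j => j) κ

@[simp] lemma canonEl_nil (κ : Fin μ) : canonEl p ζ κ [] = p κ := by
  simp [canonEl, listProdP]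

@[simp] lemma listProdP_nil : listProdP p ζ [] = 1 := rfl

@[simp] lemma listProdP_singleton (i : Fin μ) : listProdP p ζ [i] = ζ * p i := by
  simp [listProdP]

@[simp] lemma listProdP_cons (i : Fin μ) (α : List (Fin μ)) :
    listProdP p ζ (i :: α) = (ζ * p i) * listProdP p ζ α := by
  simp [listProdP]

lemma listProdP_append (α β : List (Fin μ)) :
    listProdP p ζ (α ++ β) = listProdP p ζ α * listProdP p ζ β := by
  simp [listProdP]

@[simp] lemma lastIdx_nil (κ : Fin μ) : lastIdx κ ([] : List (Fin μ)) = κ := rfl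

lemma lastIdx_concat (κ i : Fin μ) (α : List (Fin μ)) : lastIdx κ (α ++ [i]) = i := by
  simp [lastIdx, List.foldl_append]

variable {p ζ} (hp : IsPmuStruct k μ p ζ)
include hp

lemma p_mul_p (i j : Fin μ) : p i * p j = if i = j then p i else 0 := by
  by_cases h : i = j
  · subst h; simp [hp.2.1 i]
  · simp [h, hp.1 i j h]

lemma canon_mul_p (κ lam : Fin μ) (α : List (Fin μ)) :
    canonEl p ζ κ α * p lam =
      if lastIdx κ α = lam then canonEl p ζ κ α else 0 := by
  rcases List.eq_nil_or_concat α with rfl | ⟨l, a, rfl⟩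
  · simp only [canonEl, listProdP_nil, mul_one, lastIdx_nil]
    exact p_mul_p hp κ lam
  · rw [List.concat_eq_append, lastIdx_concat]
    simp only [canonEl, listProdP_append, listProdP_singleton]
    by_cases h : a = lam
    · subst h
      rw [if_pos rfl]
      simp only [mul_assoc]
      rw [hp.2.1 a]
    · rw [if_neg h]
      simp only [mul_assoc]
      rw [hp.1 a lam h]
      simp

lemma canon_mul_canon (κ lam : Fin μ) (α β : List (Fin μ)) :
    canonEl p ζ κ α * canonEl p ζ lam β =
      if lastIdx κ α = lam then canonEl p ζ κ (α ++ β) else 0 := by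
  have : canonEl p ζ κ α * canonEl p ζ lam β
      = (canonEl p ζ κ α * p lam) * listProdP p ζ β := by
    simp [canonEl, mul_assoc]
  rw [this, canon_mul_p hp]
  by_cases h : lastIdx κ α = lam
  · rw [if_pos h, if_pos h]
    simp [canonEl, listProdP_append, mul_assoc]
  · rw [if_neg h, if_neg h, zero_mul]

lemma canonZ_mul_canon (κ lam : Fin μ) (α β : List (Fin μ)) :
    (canonEl p ζ κ α * ζ) * canonEl p ζ lam β = canonEl p ζ κ (α ++ lam :: β) := by
  have h1 : α ++ lam :: β = (α ++ [lam]) ++ β := by simp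
  rw [h1]
  simp [canonEl, listProdP_append, mul_assoc]

lemma canonZ_mul_canonZ (κ lam : Fin μ) (α β : List (Fin μ)) :
    (canonEl p ζ κ α * ζ) * (canonEl p ζ lam β * ζ) =
      canonEl p ζ κ (α ++ lam :: β) * ζ := by
  rw [← mul_assoc, canonZ_mul_canon hp]

lemma canon_mul_canonZ (κ lam : Fin μ) (α β : List (Fin μ)) :
    canonEl p ζ κ α * (canonEl p ζ lam β * ζ) =
      if lastIdx κ α = lam then canonEl p ζ κ (α ++ β) * ζ else 0 := by
  rw [← mul_assoc, canon_mul_canon hp]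
  by_cases h : lastIdx κ α = lam <;> simp [h]

lemma zeta_mul_canon (κ : Fin μ) (α : List (Fin μ)) :
    ζ * canonEl p ζ κ α = ∑ lam : Fin μ, canonEl p ζ lam (κ :: α) := by
  have h1 : ζ * canonEl p ζ κ α = (∑ lam : Fin μ, p lam) * (ζ * canonEl p ζ κ α) := by
    rw [hp.2.2, one_mul]
  rw [h1, Finset.sum_mul]
  refine Finset.sum_congr rfl fun lam _ => ?_
  simp [canonEl, mul_assoc]

lemma one_eq_sum_canon : (1 : Module.End k M) = ∑ κ : Fin μ, canonEl p ζ κ [] := by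
  simp only [canonEl, listProdP_nil, mul_one]
  exact hp.2.2.symm

lemma zeta_eq_sum_canonZ : ζ = ∑ κ : Fin μ, canonEl p ζ κ [] * ζ := by
  simp only [canonEl, listProdP_nil, mul_one]
  rw [← Finset.sum_mul, hp.2.2, one_mul]

lemma trace_canonZ (κ : Fin μ) (α : List (Fin μ)) :
    LinearMap.trace k M (canonEl p ζ κ α * ζ) =
      ∑ lam : Fin μ, LinearMap.trace k M (canonEl p ζ lam (κ :: α)) := by
  rw [LinearMap.trace_mul_comm, zeta_mul_canon hp, map_sum]

omit hp

lemma dAlpha_foldl (α : List (Fin μ)) (b : Module.End k M) :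
    α.foldl (fun acc i => (-(ζ * p i)) * acc) b =
      ((-1 : k) ^ α.length) • (listProdP p ζ α.reverse * b) := by
  induction α generalizing b with
  | nil => simp
  | cons i α ih =>
    rw [List.foldl_cons, ih]
    rw [List.reverse_cons, listProdP_append, listProdP_singleton]
    have : -(ζ * p i) = (-1 : k) • (ζ * p i) := by rw [neg_one_smul]
    rw [this, List.length_cons, pow_succ]
    simp only [smul_mul_assoc, mul_smul_comm, smul_smul, mul_assoc]

lemma dAlpha_eq (α : List (Fin μ)) :
    dAlpha k μ p ζ α = ((-1 : k) ^ α.length) • listProdP p ζ α.reverse := by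
  rw [dAlpha, dAlpha_foldl, mul_one]

lemma farberCoeff_eq (κ : Fin μ) (α : List (Fin μ)) :
    farberCoeff k μ p ζ κ α =
      ((-1 : k) ^ α.length) * LinearMap.trace k M (canonEl p ζ κ α.reverse) := by
  rw [farberCoeff, dAlpha_eq, mul_smul_comm, map_smul, smul_eq_mul, canonEl]

lemma trace_canon_eq_of_farber {N : Type*} [AddCommGroup N] [Module k N]
    {q : Fin μ → Module.End k N} {ξ : Module.End k N}
    (h : ∀ (κ : Fin μ) (α : List (Fin μ)),
      farberCoeff k μ p ζ κ α = farberCoeff k μ q ξ κ α)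
    (κ : Fin μ) (α : List (Fin μ)) :
    LinearMap.trace k M (canonEl p ζ κ α) = LinearMap.trace k N (canonEl q ξ κ α) := by
  have h1 := h κ α.reverse
  rw [farberCoeff_eq, farberCoeff_eq, List.reverse_reverse, List.length_reverse] at h1
  exact mul_left_cancel₀ (pow_ne_zero _ (neg_ne_zero.mpr one_ne_zero)) h1

end Canon


section PairAlg

variable {k : Type*} [Field k] {μ : ℕ}
variable {A : Type*} [AddCommGroup A] [Module k A]
variable {B : Type*} [AddCommGroup B] [Module k B]
variable {pA : Fin μ → Module.End k A} {ζA : Module.End k A}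
variable {pB : Fin μ → Module.End k B} {ζB : Module.End k B}

lemma trace_eq_on_adjoin (hA : IsPmuStruct k μ pA ζA) (hB : IsPmuStruct k μ pB ζB)
    (htr : ∀ (κ : Fin μ) (α : List (Fin μ)),
      LinearMap.trace k A (canonEl pA ζA κ α) = LinearMap.trace k B (canonEl pB ζB κ α)) :
    ∀ d ∈ Algebra.adjoin k
        (insert ((ζA, ζB) : Module.End k A × Module.End k B)
          (Set.range fun i => (pA i, pB i))),
      LinearMap.trace k A d.1 = LinearMap.trace k B d.2 := by
  classical
  set pc : Fin μ × List (Fin μ) → Module.End k A × Module.End k B :=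
    fun x => (canonEl pA ζA x.1 x.2, canonEl pB ζB x.1 x.2) with hpc
  set pz : Fin μ × List (Fin μ) → Module.End k A × Module.End k B :=
    fun x => (canonEl pA ζA x.1 x.2 * ζA, canonEl pB ζB x.1 x.2 * ζB) with hpz
  set X : Set (Module.End k A × Module.End k B) := Set.range pc ∪ Set.range pz with hX
  set W : Submodule k (Module.End k A × Module.End k B) := Submodule.span k X with hW
  have hmemc : ∀ κ α, pc (κ, α) ∈ W := fun κ α =>
    Submodule.subset_span (Or.inl ⟨(κ, α), rfl⟩)
  have hmemz : ∀ κ α, pz (κ, α) ∈ W := fun κ α =>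
    Submodule.subset_span (Or.inr ⟨(κ, α), rfl⟩)
  have hone : (1 : Module.End k A × Module.End k B) ∈ W := by
    have h1 : (1 : Module.End k A × Module.End k B) = ∑ κ : Fin μ, pc (κ, []) := by
      refine Prod.ext ?_ ?_
      · rw [Prod.fst_sum]
        simpa [hpc] using (one_eq_sum_canon hA)
      · rw [Prod.snd_sum]
        simpa [hpc] using (one_eq_sum_canon hB)
    rw [h1]
    exact Submodule.sum_mem _ fun κ _ => hmemc κ []
  have hXmul : ∀ x ∈ X, ∀ y ∈ X, x * y ∈ W := by
    rintro x (⟨⟨κ, α⟩, rfl⟩ | ⟨⟨κ, α⟩, rfl⟩) y (⟨⟨lam, β⟩, rfl⟩ | ⟨⟨lam, β⟩, rfl⟩)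
    · have h : pc (κ, α) * pc (lam, β) =
          if lastIdx κ α = lam then pc (κ, α ++ β) else 0 := by
        simp only [hpc, Prod.mk_mul_mk]
        rw [canon_mul_canon hA, canon_mul_canon hB]
        by_cases h : lastIdx κ α = lam <;> simp [h, Prod.ext_iff]
      rw [h]
      by_cases h' : lastIdx κ α = lam
      · rw [if_pos h']; exact hmemc _ _
      · rw [if_neg h']; exact zero_mem _
    · have h : pc (κ, α) * pz (lam, β) =
          if lastIdx κ α = lam then pz (κ, α ++ β) else 0 := by
        simp only [hpc, hpz, Prod.mk_mul_mk]
        rw [canon_mul_canonZ hA, canon_mul_canonZ hB]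
        by_cases h : lastIdx κ α = lam <;> simp [h, Prod.ext_iff]
      rw [h]
      by_cases h' : lastIdx κ α = lam
      · rw [if_pos h']; exact hmemz _ _
      · rw [if_neg h']; exact zero_mem _
    · have h : pz (κ, α) * pc (lam, β) = pc (κ, α ++ lam :: β) := by
        simp only [hpc, hpz, Prod.mk_mul_mk]
        rw [canonZ_mul_canon hA, canonZ_mul_canon hB]
      rw [h]; exact hmemc _ _
    · have h : pz (κ, α) * pz (lam, β) = pz (κ, α ++ lam :: β) := by
        simp only [hpc, hpz, Prod.mk_mul_mk]
        rw [canonZ_mul_canonZ hA, canonZ_mul_canonZ hB]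
      rw [h]; exact hmemz _ _
  have hWmul : ∀ x y : Module.End k A × Module.End k B, x ∈ W → y ∈ W → x * y ∈ W := by
    intro x y hx hy
    have hle : W * W ≤ W := by
      rw [hW, Submodule.span_mul_span, Submodule.span_le]
      rintro z ⟨x, hx, y, hy, rfl⟩
      exact hXmul x hx y hy
    exact hle (Submodule.mul_mem_mul hx hy)
  have hadj : Algebra.adjoin k
      (insert ((ζA, ζB) : Module.End k A × Module.End k B)
        (Set.range fun i => (pA i, pB i))) ≤ W.toSubalgebra hone hWmul := by
    rw [Algebra.adjoin_le_iff]
    rintro x (rfl | ⟨i, rfl⟩)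
    · show _ ∈ W
      have h1 : ((ζA, ζB) : Module.End k A × Module.End k B) = ∑ κ : Fin μ, pz (κ, []) := by
        refine Prod.ext ?_ ?_
        · rw [Prod.fst_sum]
          simpa [hpz] using (zeta_eq_sum_canonZ hA)
        · rw [Prod.snd_sum]
          simpa [hpz] using (zeta_eq_sum_canonZ hB)
      rw [h1]
      exact Submodule.sum_mem _ fun κ _ => hmemz κ []
    · show ((pA i, pB i) : Module.End k A × Module.End k B) ∈ W
      have h1 : ((pA i, pB i) : Module.End k A × Module.End k B) = pc (i, []) := by
        simp [hpc]
      rw [h1]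
      exact hmemc _ _
  intro d hd
  have hdW : d ∈ W := hadj hd
  set T : (Module.End k A × Module.End k B) →ₗ[k] k :=
    (LinearMap.trace k A).comp (LinearMap.fst k _ _)
      - (LinearMap.trace k B).comp (LinearMap.snd k _ _) with hT
  have hXT : X ⊆ (LinearMap.ker T : Set _) := by
    rintro x (⟨⟨κ, α⟩, rfl⟩ | ⟨⟨κ, α⟩, rfl⟩)
    · simp only [SetLike.mem_coe, LinearMap.mem_ker, hT, LinearMap.sub_apply,
        LinearMap.comp_apply, LinearMap.fst_apply, LinearMap.snd_apply, hpc]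
      rw [htr κ α, sub_self]
    · simp only [SetLike.mem_coe, LinearMap.mem_ker, hT, LinearMap.sub_apply,
        LinearMap.comp_apply, LinearMap.fst_apply, LinearMap.snd_apply, hpz]
      rw [trace_canonZ hA, trace_canonZ hB, sub_eq_zero]
      exact Finset.sum_congr rfl fun lam _ => htr lam (κ :: α)
  have hWT : W ≤ LinearMap.ker T := Submodule.span_le.mpr hXT
  have hd0 : T d = 0 := hWT hdW
  rw [hT] at hd0
  simp only [LinearMap.sub_apply, LinearMap.comp_apply, LinearMap.fst_apply,
    LinearMap.snd_apply] at hd0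
  exact eq_of_sub_eq_zero hd0

end PairAlg

noncomputable section Key

open DirectSum Module

/-- The `k`-linear endomorphism given by the action of `r : R`. -/
def smulEndo (k : Type*) [Field k] {R : Type*} [Ring R] (A : Type*) [AddCommGroup A]
    [Module k A] [Module R A] [SMulCommClass k R A] (r : R) : Module.End k A where
  toFun := fun a => r • a
  map_add' := smul_add r
  map_smul' := fun c x => (smul_comm c r x).symm

@[simp] lemma smulEndo_apply (k : Type*) [Field k] {R : Type*} [Ring R] (A : Type*)
    [AddCommGroup A] [Module k A] [Module R A] [SMulCommClass k R A] (r : R) (a : A) :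
    smulEndo k A r a = r • a := rfl

section ExistsRho

lemma exists_good_rho (k : Type*) [Field k] {R C : Type*} [Ring R] [Algebra k R]
    [AddCommGroup C] [Module k C] [Module R C] [IsScalarTower k R C]
    [FiniteDimensional k C] {ι : Type*} [Fintype ι] (Mod : ι → Submodule R C)
    (hsimple : ∀ x, IsSimpleModule R ↥(Mod x))
    (st : Setoid ι) (hst : ∀ x y, st.r x y ↔ Nonempty (↥(Mod x) ≃ₗ[R] ↥(Mod y)))
    (c : Quotient st) :
    ∃ ρ : R, ∀ (x : ι) (y : ↥(Mod x)),
      (Quotient.mk st x = c → ρ • y = y) ∧ (Quotient.mk st x ≠ c → ρ • y = 0) := by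
  classical
  haveI : DecidableEq (Quotient st) := Classical.decEq _
  haveI hsct : ∀ x : ι, SMulCommClass k R ↥(Mod x) := fun x =>
    smulCommClass_of_algebra_tower k
  haveI hfd : ∀ x : ι, FiniteDimensional k ↥(Mod x) := fun x =>
    FiniteDimensional.of_injective ((Mod x).subtype.restrictScalars k)
      Subtype.coe_injective
  haveI hss : IsSemisimpleModule R (∀ c₀ : Quotient st, ↥(Mod (Quotient.out c₀))) :=
    isSemisimpleModule_pi fun c => (hsimple (Quotient.out c)).isSemisimpleModule'
  -- blocks between distinct classes vanish
  have hblock : ∀ (c₁ c₂ : Quotient st), c₁ ≠ c₂ →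
      ∀ ψ : ↥(Mod (Quotient.out c₂)) →ₗ[R] ↥(Mod (Quotient.out c₁)), ψ = 0 := by
    intro c₁ c₂ hne ψ
    by_contra hψ
    haveI := hsimple (Quotient.out c₂)
    haveI := hsimple (Quotient.out c₁)
    have hbij := LinearMap.bijective_of_ne_zero hψ
    have hrel : st.r (Quotient.out c₂) (Quotient.out c₁) :=
      (hst _ _).mpr ⟨LinearEquiv.ofBijective ψ hbij⟩
    have heq : Quotient.mk st (Quotient.out c₂) = Quotient.mk st (Quotient.out c₁) := Quotient.sound hrel
    rw [Quotient.out_eq, Quotient.out_eq] at heq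
    exact hne heq.symm
  -- the truncation endomorphism
  set fL : (∀ c₀ : Quotient st, ↥(Mod (Quotient.out c₀))) →ₗ[k] (∀ c₀ : Quotient st, ↥(Mod (Quotient.out c₀))) :=
    { toFun := fun v c' => if c' = c then v c' else 0
      map_add' := by intro v w; funext c'; by_cases h : c' = c <;> simp [h]
      map_smul' := by intro a v; funext c'; by_cases h : c' = c <;> simp [h] } with hfL
  have hcomm : ∀ (φ : (∀ c₀ : Quotient st, ↥(Mod (Quotient.out c₀))) →ₗ[R] (∀ c₀ : Quotient st, ↥(Mod (Quotient.out c₀))))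
      (v : ∀ c₀ : Quotient st, ↥(Mod (Quotient.out c₀))),
      fL.toAddMonoidHom (φ v) = φ (fL.toAddMonoidHom v) := by
    intro φ v
    funext c'
    have hφ : ∀ w : ∀ c₀ : Quotient st, ↥(Mod (Quotient.out c₀)), φ w c' = ((LinearMap.proj c').comp
        (φ.comp (LinearMap.single R (fun c₀ : Quotient st => ↥(Mod (Quotient.out c₀))) c'))) (w c') := by
      intro w
      have hw : w = ∑ c₂, Pi.single c₂ (w c₂) := (Finset.univ_sum_single w).symm
      conv_lhs => rw [hw, map_sum]
      rw [Finset.sum_apply]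
      rw [Finset.sum_eq_single c']
      · rfl
      · intro c₂ _ hc₂
        have h0 : ((LinearMap.proj c').comp
            (φ.comp (LinearMap.single R (fun c₀ : Quotient st => ↥(Mod (Quotient.out c₀))) c₂))) = 0 :=
          hblock c' c₂ (Ne.symm hc₂) _
        have h1 := congrArg (fun g => g (w c₂)) h0
        simpa using h1
      · intro h; exact absurd (Finset.mem_univ c') h
    show (if c' = c then φ v c' else 0) = φ (fL.toAddMonoidHom v) c'
    rw [hφ v, hφ (fL.toAddMonoidHom v)]
    by_cases h : c' = c
    · simp [hfL, h]
    · simp [hfL, h]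
  obtain ⟨ρ, hρ⟩ := density_pi hss fL.toAddMonoidHom hcomm
    (Module.finBasis k (∀ c₀ : Quotient st, ↥(Mod (Quotient.out c₀))))
  have hall : ∀ v : ∀ c₀ : Quotient st, ↥(Mod (Quotient.out c₀)), ρ • v = fL v := by
    have hEq : smulEndo k (∀ c₀ : Quotient st, ↥(Mod (Quotient.out c₀))) ρ = fL := by
      refine (Module.finBasis k (∀ c₀ : Quotient st, ↥(Mod (Quotient.out c₀)))).ext fun j => ?_
      rw [smulEndo_apply, ← hρ j]
      rfl
    intro v
    have := congrArg (fun g => g v) hEq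
    simpa using this
  refine ⟨ρ, ?_⟩
  have hrepcase : ∀ (c₀ : Quotient st) (y : ↥(Mod (Quotient.out c₀))),
      ρ • y = if c₀ = c then y else 0 := by
    intro c₀ y
    have h1 := congrArg (fun v => v c₀) (hall (Pi.single c₀ y))
    simp only [Pi.smul_apply, Pi.single_eq_same] at h1
    rw [h1]
    show fL (Pi.single c₀ y) c₀ = _
    rw [hfL]
    simp only [LinearMap.coe_mk, AddHom.coe_mk, Pi.single_eq_same]
  intro x y
  have hx : Quotient.mk st x = Quotient.mk st (Quotient.out (Quotient.mk st x)) := by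
    rw [Quotient.out_eq]
  obtain ⟨e⟩ := (hst x (Quotient.out (Quotient.mk st x))).mp (Quotient.exact hx)
  have h2 := hrepcase (Quotient.mk st x) (e y)
  have h3 : e (ρ • y) = ρ • e y := map_smul e ρ y
  constructor
  · intro h
    rw [if_pos h] at h2
    apply e.injective
    rw [h3, h2]
  · intro h
    rw [if_neg h] at h2
    apply e.injective
    rw [h3, h2, map_zero]

end ExistsRho


section TraceCount

/-- Transport between a submodule and its scalar restriction. -/
def subtypeResEquiv (k : Type*) [Field k] {R A : Type*} [Ring R] [Algebra k R]
    [AddCommGroup A] [Module k A] [Module R A] [IsScalarTower k R A]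
    (p : Submodule R A) : ↥(p.restrictScalars k) ≃ₗ[k] ↥p where
  toFun := fun x => ⟨x.1, x.2⟩
  invFun := fun x => ⟨x.1, x.2⟩
  map_add' := fun _ _ => rfl
  map_smul' := fun _ _ => rfl
  left_inv := fun _ => rfl
  right_inv := fun _ => rfl

lemma trace_smul_count (k : Type*) [Field k] {R A : Type*} [Ring R] [Algebra k R]
    [AddCommGroup A] [Module k A] [Module R A] [IsScalarTower k R A]
    [SMulCommClass k R A] [FiniteDimensional k A]
    {n : ℕ} (S : Fin n → Submodule R A) (hS : DirectSum.IsInternal S)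
    (ρ : R) (P : Fin n → Prop) (d : ℕ)
    (hact : ∀ (r : Fin n) (y : ↥(S r)), (P r → ρ • y = y) ∧ (¬ P r → ρ • y = 0))
    (hdim : ∀ r, P r → Module.finrank k ↥(S r) = d) :
    LinearMap.trace k A (smulEndo k A ρ)
      = (Nat.card {r : Fin n // P r} : k) * (d : k) := by
  classical
  have hSk := isInternal_restrictScalars k S hS
  have hmaps : ∀ r, Set.MapsTo (smulEndo k A ρ)
      ((S r).restrictScalars k) ((S r).restrictScalars k) := by
    intro r a ha
    exact (S r).smul_mem ρ ha
  rw [LinearMap.trace_eq_sum_trace_restrict hSk hmaps]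
  have hterm : ∀ r : Fin n, LinearMap.trace k ↥((S r).restrictScalars k)
      ((smulEndo k A ρ).restrict (hmaps r)) = if P r then (d : k) else 0 := by
    intro r
    by_cases h : P r
    · rw [if_pos h]
      have hid : (smulEndo k A ρ).restrict (hmaps r) = LinearMap.id := by
        refine LinearMap.ext fun x => Subtype.ext ?_
        have hx := (hact r ⟨x.1, x.2⟩).1 h
        show ρ • (x : A) = (x : A)
        exact congrArg Subtype.val hx
      rw [hid, LinearMap.trace_id]
      have hfr : Module.finrank k ↥((S r).restrictScalars k) = d := by
        rw [← hdim r h]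
        exact LinearEquiv.finrank_eq (subtypeResEquiv k (S r))
      rw [hfr]
    · rw [if_neg h]
      have h0 : (smulEndo k A ρ).restrict (hmaps r) = 0 := by
        refine LinearMap.ext fun x => Subtype.ext ?_
        have hx := (hact r ⟨x.1, x.2⟩).2 h
        show ρ • (x : A) = (0 : A)
        exact congrArg Subtype.val hx
      rw [h0, map_zero]
  rw [Finset.sum_congr rfl fun r _ => hterm r]
  rw [← Finset.sum_filter, Finset.sum_const, nsmul_eq_mul]
  congr 1
  rw [Nat.card_eq_fintype_card, Fintype.card_subtype]

end TraceCount


section KeyIso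

theorem key_iso (k : Type*) [Field k] [CharZero k] {R : Type*} [Ring R] [Algebra k R]
    {A : Type*} [AddCommGroup A] [Module k A] [Module R A] [IsScalarTower k R A]
    [SMulCommClass k R A] [FiniteDimensional k A]
    {B : Type*} [AddCommGroup B] [Module k B] [Module R B] [IsScalarTower k R B]
    [SMulCommClass k R B] [FiniteDimensional k B]
    {n m : ℕ} (S : Fin n → Submodule R A) (T : Fin m → Submodule R B)
    (hS : DirectSum.IsInternal S) (hT : DirectSum.IsInternal T)
    (hSs : ∀ r, IsSimpleModule R ↥(S r)) (hTs : ∀ q, IsSimpleModule R ↥(T q))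
    (htr : ∀ ρ : R, LinearMap.trace k A (smulEndo k A ρ)
      = LinearMap.trace k B (smulEndo k B ρ)) :
    Nonempty (A ≃ₗ[R] B) := by
  classical
  set Mod : (Fin n ⊕ Fin m) → Submodule R (A × B) :=
    Sum.elim (fun r => (S r).map (LinearMap.inl R A B))
      (fun q => (T q).map (LinearMap.inr R A B)) with hMod
  have eL : ∀ r : Fin n, ↥(S r) ≃ₗ[R] ↥(Mod (Sum.inl r)) := fun r =>
    Submodule.equivMapOfInjective (LinearMap.inl R A B) LinearMap.inl_injective (S r)
  have eR : ∀ q : Fin m, ↥(T q) ≃ₗ[R] ↥(Mod (Sum.inr q)) := fun q =>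
    Submodule.equivMapOfInjective (LinearMap.inr R A B) LinearMap.inr_injective (T q)
  have hModSimple : ∀ x, IsSimpleModule R ↥(Mod x) := by
    rintro (r | q)
    · haveI := hSs r; exact IsSimpleModule.congr (eL r).symm
    · haveI := hTs q; exact IsSimpleModule.congr (eR q).symm
  set st : Setoid (Fin n ⊕ Fin m) :=
    ⟨fun x y => Nonempty (↥(Mod x) ≃ₗ[R] ↥(Mod y)),
      ⟨fun x => ⟨LinearEquiv.refl R _⟩, fun h => h.elim fun e => ⟨e.symm⟩,
        fun h1 h2 => h1.elim fun e1 => h2.elim fun e2 => ⟨e1.trans e2⟩⟩⟩ with hst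
  haveI : DecidableEq (Quotient st) := Classical.decEq _
  have hcard : ∀ c : Quotient st,
      Nat.card {r : Fin n // Quotient.mk st (Sum.inl r) = c}
        = Nat.card {q : Fin m // Quotient.mk st (Sum.inr q) = c} := by
    intro c
    obtain ⟨ρ, hρ⟩ := exists_good_rho k Mod hModSimple st (fun x y => Iff.rfl) c
    have hactA : ∀ (r : Fin n) (y : ↥(S r)),
        (Quotient.mk st (Sum.inl r) = c → ρ • y = y) ∧
          (Quotient.mk st (Sum.inl r) ≠ c → ρ • y = 0) := by
      intro r y
      have h1 := hρ (Sum.inl r) (eL r y)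
      refine ⟨fun h => ?_, fun h => ?_⟩
      · have h2 := h1.1 h
        apply (eL r).injective
        rw [map_smul, h2]
      · have h2 := h1.2 h
        apply (eL r).injective
        rw [map_smul, h2, map_zero]
    have hactB : ∀ (q : Fin m) (y : ↥(T q)),
        (Quotient.mk st (Sum.inr q) = c → ρ • y = y) ∧
          (Quotient.mk st (Sum.inr q) ≠ c → ρ • y = 0) := by
      intro q y
      have h1 := hρ (Sum.inr q) (eR q y)
      refine ⟨fun h => ?_, fun h => ?_⟩
      · have h2 := h1.1 h
        apply (eR q).injective
        rw [map_smul, h2]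
      · have h2 := h1.2 h
        apply (eR q).injective
        rw [map_smul, h2, map_zero]
    have hdimA : ∀ r : Fin n, Quotient.mk st (Sum.inl r) = c →
        Module.finrank k ↥(S r) = Module.finrank k ↥(Mod (Quotient.out c)) := by
      intro r h
      have hrel : st.r (Sum.inl r) (Quotient.out c) := Quotient.exact (by
        rw [Quotient.out_eq]; exact h)
      obtain ⟨e⟩ := hrel
      exact LinearEquiv.finrank_eq (((eL r).trans e).restrictScalars k)
    have hdimB : ∀ q : Fin m, Quotient.mk st (Sum.inr q) = c →
        Module.finrank k ↥(T q) = Module.finrank k ↥(Mod (Quotient.out c)) := by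
      intro q h
      have hrel : st.r (Sum.inr q) (Quotient.out c) := Quotient.exact (by
        rw [Quotient.out_eq]; exact h)
      obtain ⟨e⟩ := hrel
      exact LinearEquiv.finrank_eq (((eR q).trans e).restrictScalars k)
    have htrA := trace_smul_count k S hS ρ (fun r => Quotient.mk st (Sum.inl r) = c)
      (Module.finrank k ↥(Mod (Quotient.out c))) hactA hdimA
    have htrB := trace_smul_count k T hT ρ (fun q => Quotient.mk st (Sum.inr q) = c)
      (Module.finrank k ↥(Mod (Quotient.out c))) hactB hdimB
    have heq := htrA.symm.trans ((htr ρ).trans htrB)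
    haveI := hModSimple (Quotient.out c)
    haveI : FiniteDimensional k ↥(Mod (Quotient.out c)) :=
      FiniteDimensional.of_injective ((Mod (Quotient.out c)).subtype.restrictScalars k)
        Subtype.coe_injective
    have hpos : 0 < Module.finrank k ↥(Mod (Quotient.out c)) := by
      haveI : Nontrivial ↥(Mod (Quotient.out c)) := IsSimpleModule.nontrivial R _
      exact Module.finrank_pos
    have hd0 : ((Module.finrank k ↥(Mod (Quotient.out c))) : k) ≠ 0 :=
      Nat.cast_ne_zero.mpr hpos.ne'
    have hfin := mul_right_cancel₀ hd0 heq
    exact_mod_cast hfin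
  have fibe : ∀ c : Quotient st, {r : Fin n // Quotient.mk st (Sum.inl r) = c}
      ≃ {q : Fin m // Quotient.mk st (Sum.inr q) = c} := fun c =>
    Fintype.equivOfCardEq (by
      have h := hcard c
      simpa [Nat.card_eq_fintype_card] using h)
  let σ : Fin n ≃ Fin m := Equiv.ofFiberEquiv (f := fun r => Quotient.mk st (Sum.inl r))
      (g := fun q => Quotient.mk st (Sum.inr q)) fibe
  have hσ : ∀ r, Quotient.mk st (Sum.inr (σ r)) = Quotient.mk st (Sum.inl r) :=
    fun r => Equiv.ofFiberEquiv_map fibe r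
  have hisos : ∀ r : Fin n, Nonempty (↥(S r) ≃ₗ[R] ↥(T (σ r))) := by
    intro r
    have hrel : st.r (Sum.inl r) (Sum.inr (σ r)) := Quotient.exact (hσ r).symm
    obtain ⟨e⟩ := hrel
    exact ⟨((eL r).trans e).trans (eR (σ r)).symm⟩
  have hTσ : DirectSum.IsInternal (fun r : Fin n => T (σ r)) := by
    rw [DirectSum.isInternal_submodule_iff_iSupIndep_and_iSup_eq_top] at hT ⊢
    exact ⟨hT.1.comp σ.injective, (Equiv.iSup_comp (g := T) σ).trans hT.2⟩
  let E1 : (⨁ r : Fin n, ↥(S r)) ≃ₗ[R] A :=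
    LinearEquiv.ofBijective (DirectSum.coeLinearMap S) hS
  let E3 : (⨁ r : Fin n, ↥(T (σ r))) ≃ₗ[R] B :=
    LinearEquiv.ofBijective (DirectSum.coeLinearMap fun r => T (σ r)) hTσ
  let E2 : (⨁ r : Fin n, ↥(S r)) ≃ₗ[R] ⨁ r : Fin n, ↥(T (σ r)) :=
    DFinsupp.mapRange.linearEquiv fun r => Classical.choice (hisos r)
  exact ⟨(E1.symm.trans E2).trans E3⟩

end KeyIso

end Key



noncomputable section Transfer

open DirectSum

lemma semisimple_transfer (k : Type*) [Field k] {μ : ℕ} {A : Type*} [AddCommGroup A]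
    [Module k A] {pA : Fin μ → Module.End k A} {ζA : Module.End k A}
    (R : Type*) [Ring R] [Algebra k R] [Module R A] [IsScalarTower k R A]
    (gp : Fin μ → R) (gz : R)
    (hgp : ∀ (i : Fin μ) (a : A), gp i • a = pA i a) (hgz : ∀ a : A, gz • a = ζA a)
    (hstab : ∀ (q : Submodule k A), (∀ i, ∀ x ∈ q, pA i x ∈ q) →
      (∀ x ∈ q, ζA x ∈ q) → ∀ (d : R), ∀ x ∈ q, d • x ∈ q)
    (hAss : IsSemisimplePStruct k μ pA ζA) :
    ∃ (n : ℕ) (SR : Fin n → Submodule R A),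
      DirectSum.IsInternal SR ∧ ∀ r, IsSimpleModule R ↥(SR r) := by
  classical
  obtain ⟨n, s, hsp, hsz, hint, hsimp⟩ := hAss
  set SR : Fin n → Submodule R A := fun r =>
    { carrier := s r
      add_mem' := fun hx hy => (s r).add_mem hx hy
      zero_mem' := (s r).zero_mem
      smul_mem' := fun d {x} hx => hstab (s r) (hsp r) (hsz r) d x hx } with hSR
  refine ⟨n, SR, ?_, ?_⟩
  · -- internality over R
    have hIndk := hint.submodule_iSupIndep
    have hSupk := hint.submodule_iSup_eq_top
    rw [DirectSum.isInternal_submodule_iff_iSupIndep_and_iSup_eq_top]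
    constructor
    · intro r
      rw [disjoint_iff, Submodule.eq_bot_iff]
      intro x hx
      have hx1 : x ∈ s r := hx.1
      have hx2 : x ∈ ⨆ j, ⨆ _ : j ≠ r, SR j := hx.2
      -- the k-supremum of the other components
      set Kk : Submodule k A := ⨆ j, ⨆ _ : j ≠ r, s j with hKk
      have hKinv : ∀ (f : Module.End k A), (∀ j, ∀ y ∈ s j, f y ∈ s j) →
          ∀ y ∈ Kk, f y ∈ Kk := by
        intro f hf y hy
        have hmap : Submodule.map f Kk ≤ Kk := by
          rw [hKk, Submodule.map_iSup]
          refine iSup_le fun j => ?_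
          rw [Submodule.map_iSup]
          refine iSup_le fun hj => le_trans ?_ (le_iSup₂ (f := fun j (_ : j ≠ r) => s j) j hj)
          exact Submodule.map_le_iff_le_comap.mpr fun z hz => hf j z hz
        exact hmap (Submodule.mem_map_of_mem hy)
      set KD : Submodule R A :=
        { carrier := Kk
          add_mem' := fun hx hy => Kk.add_mem hx hy
          zero_mem' := Kk.zero_mem
          smul_mem' := fun d {y} hy => hstab Kk
            (fun i => hKinv (pA i) (fun j => hsp j i)) (hKinv ζA hsz) d y hy } with hKD
      have hle : (⨆ j, ⨆ _ : j ≠ r, SR j) ≤ KD := by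
        refine iSup_le fun j => iSup_le fun hj => ?_
        intro y hy
        exact Submodule.mem_iSup_of_mem j (Submodule.mem_iSup_of_mem hj hy)
      have hx2' : x ∈ Kk := hle hx2
      exact Submodule.disjoint_def.mp (hIndk r) x hx1 hx2'
    · rw [eq_top_iff]
      intro a _
      have ha : a ∈ ⨆ j, s j := by rw [hSupk]; trivial
      have hle : (⨆ j, s j) ≤ (⨆ j, SR j).restrictScalars k :=
        iSup_le fun j => fun x hx => Submodule.mem_iSup_of_mem j hx
      exact hle ha
  · -- simplicity
    intro r
    rw [isSimpleModule_iff_isAtom]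
    constructor
    · intro hbot
      obtain ⟨x0, hx0⟩ := (hsimp r).1
      have hmem : (x0 : A) ∈ SR r := x0.2
      rw [hbot] at hmem
      exact hx0 (Subtype.ext ((Submodule.mem_bot R).mp hmem))
    · intro b hb
      have hble : ∀ x ∈ b, x ∈ s r := fun x hx => hb.le hx
      set q : Submodule k ↥(s r) :=
        (b.restrictScalars k).comap (s r).subtype with hq
      have hqp : ∀ i : Fin μ, ∀ x ∈ q,
          ((pA i).restrict (fun x hx => hsp r i x hx)) x ∈ q := by
        intro i x hx
        have h1 : pA i (x : A) ∈ b := by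
          rw [← hgp i]; exact b.smul_mem (gp i) hx
        exact h1
      have hqz : ∀ x ∈ q, (ζA.restrict (fun x hx => hsz r x hx)) x ∈ q := by
        intro x hx
        have h1 : ζA (x : A) ∈ b := by
          rw [← hgz]; exact b.smul_mem gz hx
        exact h1
      rcases (hsimp r).2 q ⟨hqp, hqz⟩ with hq0 | hq0
      · rw [Submodule.eq_bot_iff]
        intro y hy
        have hmem : (⟨y, hble y hy⟩ : ↥(s r)) ∈ q := hy
        rw [hq0] at hmem
        exact congrArg Subtype.val ((Submodule.mem_bot k).mp hmem)
      · exfalso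
        have hle : SR r ≤ b := by
          intro y hy
          have hmem : (⟨y, hy⟩ : ↥(s r)) ∈ q := by rw [hq0]; trivial
          exact hmem
        exact hb.2 hle

end Transfer

noncomputable section EasyDir

variable {k : Type*} [Field k] {μ : ℕ}
variable {A : Type*} [AddCommGroup A] [Module k A]
variable {B : Type*} [AddCommGroup B] [Module k B]

lemma farber_of_iso (pA : Fin μ → Module.End k A) (ζA : Module.End k A)
    (pB : Fin μ → Module.End k B) (ζB : Module.End k B)
    (e : A ≃ₗ[k] B) (hp : ∀ (i : Fin μ) (x : A), e (pA i x) = pB i (e x))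
    (hz : ∀ x : A, e (ζA x) = ζB (e x)) (κ : Fin μ) (α : List (Fin μ)) :
    farberCoeff k μ pA ζA κ α = farberCoeff k μ pB ζB κ α := by
  have hconj : ∀ f g : Module.End k A, e.conj (f * g) = e.conj f * e.conj g := by
    intro f g
    ext y
    simp [LinearEquiv.conj_apply, Module.End.mul_apply]
  have hpB : ∀ i, pB i = e.conj (pA i) := by
    intro i
    ext y
    rw [LinearEquiv.conj_apply]
    simp only [LinearMap.comp_apply, LinearEquiv.coe_coe]
    rw [hp i (e.symm y), LinearEquiv.apply_symm_apply]
  have hzB : ζB = e.conj ζA := by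
    ext y
    rw [LinearEquiv.conj_apply]
    simp only [LinearMap.comp_apply, LinearEquiv.coe_coe]
    rw [hz (e.symm y), LinearEquiv.apply_symm_apply]
  have hone : e.conj (1 : Module.End k A) = 1 := by
    ext y
    simp [LinearEquiv.conj_apply]
  have hd : ∀ (α : List (Fin μ)) (b : Module.End k A),
      List.foldl (fun acc i => (-(ζB * pB i)) * acc) (e.conj b) α
        = e.conj (List.foldl (fun acc i => (-(ζA * pA i)) * acc) b α) := by
    intro α
    induction α with
    | nil => intro b; rfl
    | cons i α ih =>
      intro b
      rw [List.foldl_cons, List.foldl_cons, ← ih]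
      congr 1
      rw [hzB, hpB, ← hconj, ← map_neg, ← hconj]
  have hdA : dAlpha k μ pB ζB α = e.conj (dAlpha k μ pA ζA α) := by
    rw [dAlpha, dAlpha, ← hone, hd]
  rw [farberCoeff, farberCoeff, hdA, hpB, ← hconj, LinearMap.trace_conj']

end EasyDir


/-- Farber: over an algebraically closed field of characteristic zero,
two finite-dimensional semisimple `P_μ`-module structures are isomorphic iff they
have the same Farber coefficients. -/
theorem semisimple_pstruct_iso_iff_farberCoeff_eq
    (k : Type*) [Field k] [IsAlgClosed k] [CharZero k] (μ : ℕ) (hμ : 1 ≤ μ)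
    (A : Type*) [AddCommGroup A] [Module k A] [FiniteDimensional k A]
    (B : Type*) [AddCommGroup B] [Module k B] [FiniteDimensional k B]
    (pA : Fin μ → Module.End k A) (ζA : Module.End k A)
    (pB : Fin μ → Module.End k B) (ζB : Module.End k B)
    (hA : IsPmuStruct k μ pA ζA) (hB : IsPmuStruct k μ pB ζB)
    (hAss : IsSemisimplePStruct k μ pA ζA) (hBss : IsSemisimplePStruct k μ pB ζB) :
    (∃ e : A ≃ₗ[k] B,
        (∀ (i : Fin μ) (x : A), e (pA i x) = pB i (e x)) ∧
          ∀ x : A, e (ζA x) = ζB (e x)) ↔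
      ∀ (κ : Fin μ) (α : List (Fin μ)),
        farberCoeff k μ pA ζA κ α = farberCoeff k μ pB ζB κ α := by
  constructor
  · rintro ⟨e, hp, hz⟩ κ α
    exact farber_of_iso pA ζA pB ζB e hp hz κ α
  · intro hF
    classical
    have htrC : ∀ (κ : Fin μ) (α : List (Fin μ)),
        LinearMap.trace k A (canonEl pA ζA κ α) = LinearMap.trace k B (canonEl pB ζB κ α) :=
      fun κ α => trace_canon_eq_of_farber (fun κ' α' => hF κ' α') κ α
    set G : Set (Module.End k A × Module.End k B) :=
      insert (ζA, ζB) (Set.range fun i => (pA i, pB i)) with hG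
    set D := Algebra.adjoin k G with hD
    have htrD : ∀ d ∈ D, LinearMap.trace k A d.1 = LinearMap.trace k B d.2 :=
      trace_eq_on_adjoin hA hB htrC
    letI : Module ↥D A := Module.compHom A
      ((RingHom.fst (Module.End k A) (Module.End k B)).comp D.val.toRingHom)
    letI : Module ↥D B := Module.compHom B
      ((RingHom.snd (Module.End k A) (Module.End k B)).comp D.val.toRingHom)
    have hsmulA : ∀ (d : ↥D) (a : A), d • a = (d : Module.End k A × Module.End k B).1 a :=
      fun _ _ => rfl
    have hsmulB : ∀ (d : ↥D) (b : B), d • b = (d : Module.End k A × Module.End k B).2 b :=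
      fun _ _ => rfl
    letI : IsScalarTower k ↥D A := ⟨fun c d a => by
      show ((c • d : ↥D) : Module.End k A × Module.End k B).1 a
        = c • (((d : Module.End k A × Module.End k B).1) a)
      rfl⟩
    letI : IsScalarTower k ↥D B := ⟨fun c d b => by
      show ((c • d : ↥D) : Module.End k A × Module.End k B).2 b
        = c • (((d : Module.End k A × Module.End k B).2) b)
      rfl⟩
    letI : SMulCommClass k ↥D A := smulCommClass_of_algebra_tower k
    letI : SMulCommClass k ↥D B := smulCommClass_of_algebra_tower k
    set gpel : Fin μ → ↥D := fun i =>
      ⟨(pA i, pB i), Algebra.subset_adjoin (Set.mem_insert_of_mem _ ⟨i, rfl⟩)⟩ with hgpel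
    set gzel : ↥D := ⟨(ζA, ζB), Algebra.subset_adjoin (Set.mem_insert _ _)⟩ with hgzel
    have hstabA : ∀ (q : Submodule k A), (∀ i, ∀ x ∈ q, pA i x ∈ q) →
        (∀ x ∈ q, ζA x ∈ q) → ∀ (d : ↥D), ∀ x ∈ q, d • x ∈ q := by
      intro q hqp hqz d x hx
      show (d : Module.End k A × Module.End k B).1 x ∈ q
      have hle : D ≤
          { carrier := {u : Module.End k A × Module.End k B | ∀ y ∈ q, u.1 y ∈ q}
            mul_mem' := fun {u v} hu hv y hy => hu _ (hv y hy)
            one_mem' := fun y hy => hy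
            add_mem' := fun {u v} hu hv y hy => q.add_mem (hu y hy) (hv y hy)
            zero_mem' := fun y _ => q.zero_mem
            algebraMap_mem' := fun c y hy => by
              show (algebraMap k (Module.End k A) c) y ∈ q
              rw [Module.algebraMap_end_apply]
              exact q.smul_mem c hy } := by
        rw [hD, Algebra.adjoin_le_iff]
        rintro u (rfl | ⟨i, rfl⟩)
        · exact fun y hy => hqz y hy
        · exact fun y hy => hqp i y hy
      exact hle d.2 x hx
    have hstabB : ∀ (q : Submodule k B), (∀ i, ∀ x ∈ q, pB i x ∈ q) →
        (∀ x ∈ q, ζB x ∈ q) → ∀ (d : ↥D), ∀ x ∈ q, d • x ∈ q := by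
      intro q hqp hqz d x hx
      show (d : Module.End k A × Module.End k B).2 x ∈ q
      have hle : D ≤
          { carrier := {u : Module.End k A × Module.End k B | ∀ y ∈ q, u.2 y ∈ q}
            mul_mem' := fun {u v} hu hv y hy => hu _ (hv y hy)
            one_mem' := fun y hy => hy
            add_mem' := fun {u v} hu hv y hy => q.add_mem (hu y hy) (hv y hy)
            zero_mem' := fun y _ => q.zero_mem
            algebraMap_mem' := fun c y hy => by
              show (algebraMap k (Module.End k B) c) y ∈ q
              rw [Module.algebraMap_end_apply]
              exact q.smul_mem c hy } := by
        rw [hD, Algebra.adjoin_le_iff]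
        rintro u (rfl | ⟨i, rfl⟩)
        · exact fun y hy => hqz y hy
        · exact fun y hy => hqp i y hy
      exact hle d.2 x hx
    obtain ⟨nA, SA, hSAint, hSAsimp⟩ := semisimple_transfer k ↥D gpel gzel
      (fun i a => rfl) (fun a => rfl) hstabA hAss
    obtain ⟨nB, SB, hSBint, hSBsimp⟩ := semisimple_transfer k ↥D gpel gzel
      (fun i b => rfl) (fun b => rfl) hstabB hBss
    have htrR : ∀ ρ : ↥D, LinearMap.trace k A (smulEndo k A ρ)
        = LinearMap.trace k B (smulEndo k B ρ) := by
      intro ρ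
      rw [show smulEndo k A ρ = (ρ : Module.End k A × Module.End k B).1 from
          LinearMap.ext fun a => rfl,
        show smulEndo k B ρ = (ρ : Module.End k A × Module.End k B).2 from
          LinearMap.ext fun b => rfl]
      exact htrD ρ.1 ρ.2
    obtain ⟨E⟩ := key_iso k SA SB hSAint hSBint hSAsimp hSBsimp htrR
    refine ⟨E.restrictScalars k, fun i x => ?_, fun x => ?_⟩
    · exact (map_smul E (gpel i) x : _)
    · exact (map_smul E gzel x : _)
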